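/- The generating function A_2 of the 3-Catalan numbers, satisfying A_2(q)=1+q·A_2(q)^3 with A_2(0)=1, obeys A_2(4x^2/27) = (3/x)·sin((1/3)·arcsin x) for 0 < x < 1. -/

import Mathlib

/-!
With `x = sin 3θ`, the triple-angle formula shows that `y = 3 sin θ / sin 3θ` solves
`y = 1 + q y³` for `q = 4x²/27`, and `0 ≤ y ≤ 3/2` when `0 < θ ≤ π/6`. The series `A_2` solves
the same cubic: its coefficients are the Raney numbers `raney 3 1 n`, and the convolution identity
`raney 3 a ⋆ raney 3 c = raney 3 (a + c)` gives `A_2³ = ∑ raney 3 3 n qⁿ = (A_2 - 1) / q`.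
For `q < 4/27` the cubic has at most one root in `[0, 3/2]`, and `A_2 ≤ y` because the partial
sums of `A_2` obey `S_{N+1} ≤ 1 + q S_N³`.
-/

open Finset Real

theorem Finset.sum_range_sum_antidiagonal_le {R : Type*} [CommSemiring R] [PartialOrder R]
    [IsOrderedRing R] {u v : ℕ → R} (hu : 0 ≤ u) (hv : 0 ≤ v) (N : ℕ) :
    ∑ n ∈ range N, ∑ ij ∈ antidiagonal n, u ij.1 * v ij.2 ≤
      (∑ n ∈ range N, u n) * ∑ n ∈ range N, v n := by
  simp_rw [Nat.sum_antidiagonal_eq_sum_range_succ_mk, sum_range_diag_flip N fun i j => u i * v j,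
    sum_mul_sum]
  refine sum_le_sum fun i _ => sum_le_sum_of_subset_of_nonneg ?_ fun j _ _ => ?_
  · exact range_subset_range.mpr (Nat.sub_le N i)
  · exact mul_nonneg (hu i) (hv j)

theorem Nat.pow_mul_pow_mul_choose_le_add_pow (x y : ℕ) {m k : ℕ} (hk : k ≤ m) :
    x ^ k * y ^ (m - k) * m.choose k ≤ (x + y) ^ m := by
  rw [add_pow]
  simp only [Nat.cast_id]
  exact single_le_sum (f := fun i => x ^ i * y ^ (m - i) * m.choose i)
    (fun _ _ => Nat.zero_le _) (mem_range.mpr (Nat.lt_succ_of_le hk))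

/-- Raney numbers: `raney p a k` is the coefficient of `q ^ k` in `B(q) ^ a`, where
`B = 1 + q B ^ p`; the recursion is `B ^ (a + 1) = B ^ a + q B ^ (a + p)`. -/
def raney (p : ℕ) : ℕ → ℕ → ℕ
  | _, 0 => 1
  | 0, _ + 1 => 0
  | a + 1, k + 1 => raney p a (k + 1) + raney p (a + p) k
termination_by a k => (k, a)

namespace raney

@[simp] theorem zero_right (p a : ℕ) : raney p a 0 = 1 := by rw [raney]

@[simp] theorem zero_succ (p k : ℕ) : raney p 0 (k + 1) = 0 := by rw [raney]

theorem succ_succ (p a k : ℕ) :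
    raney p (a + 1) (k + 1) = raney p a (k + 1) + raney p (a + p) k := by
  rw [raney]

theorem one_succ (p k : ℕ) : raney p 1 (k + 1) = raney p p k := by
  simp [succ_succ]

theorem sum_antidiagonal_mul (p a c k : ℕ) :
    ∑ ij ∈ antidiagonal k, raney p a ij.1 * raney p c ij.2 = raney p (a + c) k := by
  induction a, k using raney.induct p with
  | case1 a => simp
  | case2 k => simp [Nat.sum_antidiagonal_succ]
  | case3 a k iha ihk =>
    rw [Nat.sum_antidiagonal_succ] at iha ⊢
    simp only [succ_succ, add_mul, sum_add_distrib, ihk, zero_right, one_mul] at iha ⊢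
    rw [show a + 1 + c = a + c + 1 by ring, succ_succ, ← iha, show a + c + p = a + p + c by ring]
    ring

theorem sum_antidiagonal_mul_pow {R : Type*} [CommSemiring R] (p a c : ℕ) (x : R) (n : ℕ) :
    ∑ ij ∈ antidiagonal n, (raney p a ij.1 : R) * x ^ ij.1 * ((raney p c ij.2 : R) * x ^ ij.2) =
      (raney p (a + c) n : R) * x ^ n := by
  rw [← sum_antidiagonal_mul, Nat.cast_sum, sum_mul]
  refine sum_congr rfl fun ij hij => ?_
  rw [← mem_antidiagonal.mp hij, pow_add]
  push_cast
  ring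

theorem mul_eq_mul_choose {p : ℕ} (hp : 0 < p) (a k : ℕ) :
    (a + p * k) * raney p a k = a * (a + p * k).choose k := by
  induction a, k using raney.induct p with
  | case1 a => simp
  | case2 k => simp
  | case3 a k iha ihk =>
    set N := a + p * k + p with hN
    have hkN : k ≤ N := by nlinarith
    have pascal : (N + 1).choose (k + 1) = N.choose k + N.choose (k + 1) :=
      Nat.choose_succ_succ' N k
    have choose_succ := Nat.choose_succ_right_eq N k
    rw [show a + p * (k + 1) = N by ring] at iha
    rw [show a + p + p * k = N by ring] at ihk
    rw [succ_succ, show a + 1 + p * (k + 1) = N + 1 by ring, pascal]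
    -- after multiplying by `N`, the step follows from `iha`, `ihk` and `choose_succ` alone
    apply Nat.eq_of_mul_eq_mul_left (show 0 < N by positivity)
    zify [hkN] at iha ihk choose_succ hN ⊢
    linear_combination (↑N + 1 : ℤ) * (iha + ihk) - (p : ℤ) * choose_succ
      - ((N.choose k : ℤ) + (N.choose (k + 1) : ℤ)) * hN

theorem mul_one_eq_choose {p : ℕ} (hp : 0 < p) (n : ℕ) :
    ((p - 1) * n + 1) * raney p 1 n = (p * n).choose n := by
  have h := Nat.choose_mul_succ_eq (p * n) n
  rw [show p * n + 1 - n = (p - 1) * n + 1 by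
    rw [Nat.sub_mul, one_mul]; have := Nat.le_mul_of_pos_left n hp; omega] at h
  rw [← one_mul ((p * n + 1).choose n), add_comm, ← mul_eq_mul_choose hp, add_comm] at h
  apply Nat.eq_of_mul_eq_mul_right (show 0 < p * n + 1 by positivity)
  rw [h]
  ring

variable {p : ℕ} {q : ℝ}

theorem hasSum_add (hq : 0 ≤ q) {a c : ℕ} (ha : Summable fun n => (raney p a n : ℝ) * q ^ n)
    (hc : Summable fun n => (raney p c n : ℝ) * q ^ n) :
    HasSum (fun n => (raney p (a + c) n : ℝ) * q ^ n)
      ((∑' n, (raney p a n : ℝ) * q ^ n) * ∑' n, (raney p c n : ℝ) * q ^ n) := by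
  have hprod := ha.mul_of_nonneg hc (fun n => by positivity) (fun n => by positivity)
  rw [ha.tsum_mul_tsum_eq_tsum_sum_antidiagonal hc hprod,
    ← funext (sum_antidiagonal_mul_pow p a c q)]
  exact (summable_sum_mul_antidiagonal_of_summable_mul (f := fun n => (raney p a n : ℝ) * q ^ n)
    (g := fun n => (raney p c n : ℝ) * q ^ n) hprod).hasSum

theorem hasSum_pow (hq : 0 ≤ q) (h : Summable fun n => (raney p 1 n : ℝ) * q ^ n) (m : ℕ) :
    HasSum (fun n => (raney p m n : ℝ) * q ^ n) ((∑' n, (raney p 1 n : ℝ) * q ^ n) ^ m) := by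
  induction m with
  | zero =>
    convert hasSum_single (f := fun n => (raney p 0 n : ℝ) * q ^ n) 0 fun n hn => ?_
    · simp
    · obtain ⟨k, rfl⟩ := Nat.exists_eq_succ_of_ne_zero hn
      simp
  | succ m ih =>
    rw [pow_succ, ← ih.tsum_eq]
    exact hasSum_add hq ih.summable h

theorem tsum_one_eq_one_add_mul_pow (hq : 0 ≤ q)
    (h : Summable fun n => (raney p 1 n : ℝ) * q ^ n) :
    ∑' n, (raney p 1 n : ℝ) * q ^ n = 1 + q * (∑' n, (raney p 1 n : ℝ) * q ^ n) ^ p := by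
  rw [← (hasSum_pow hq h p).tsum_eq, h.tsum_eq_zero_add, ← tsum_mul_left]
  simp only [zero_right, Nat.cast_one, pow_zero, one_mul, one_succ, pow_succ]
  congr 1
  exact tsum_congr fun n => by ring

theorem sum_range_le_pow (hq : 0 ≤ q) (N m : ℕ) :
    ∑ n ∈ range N, (raney p m n : ℝ) * q ^ n ≤
      (∑ n ∈ range N, (raney p 1 n : ℝ) * q ^ n) ^ m := by
  have hnonneg (a : ℕ) : 0 ≤ fun n => (raney p a n : ℝ) * q ^ n := fun n => by positivity
  induction m with
  | zero =>
    cases N with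
    | zero => simp
    | succ N => simp [sum_range_succ']
  | succ m ih =>
    calc ∑ n ∈ range N, (raney p (m + 1) n : ℝ) * q ^ n
        = ∑ n ∈ range N, ∑ ij ∈ antidiagonal n,
            (raney p m ij.1 : ℝ) * q ^ ij.1 * ((raney p 1 ij.2 : ℝ) * q ^ ij.2) :=
          (sum_congr rfl fun n _ => sum_antidiagonal_mul_pow p m 1 q n).symm
      _ ≤ (∑ n ∈ range N, (raney p m n : ℝ) * q ^ n) *
            ∑ n ∈ range N, (raney p 1 n : ℝ) * q ^ n :=
          sum_range_sum_antidiagonal_le (hnonneg m) (hnonneg 1) N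
      _ ≤ _ := by
          rw [pow_succ]
          exact mul_le_mul_of_nonneg_right ih (sum_nonneg fun n _ => hnonneg 1 n)

theorem tsum_one_le_of_one_add_mul_pow_le (hq : 0 ≤ q) {y : ℝ} (hy0 : 0 ≤ y)
    (hy : 1 + q * y ^ p ≤ y) : ∑' n, (raney p 1 n : ℝ) * q ^ n ≤ y := by
  refine Real.tsum_le_of_sum_range_le (fun n => by positivity) fun N => ?_
  induction N with
  | zero => simpa using hy0
  | succ N ih =>
    have hpow : (∑ n ∈ range N, (raney p 1 n : ℝ) * q ^ n) ^ p ≤ y ^ p :=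
      pow_le_pow_left₀ (sum_nonneg fun n _ => by positivity) ih p
    calc ∑ n ∈ range (N + 1), (raney p 1 n : ℝ) * q ^ n
        = 1 + q * ∑ n ∈ range N, (raney p p n : ℝ) * q ^ n := by
          rw [sum_range_succ', mul_sum]
          simp only [one_succ, zero_right, Nat.cast_one, pow_zero, one_mul, pow_succ]
          rw [add_comm]
          congr 1
          exact sum_congr rfl fun n _ => by ring
      _ ≤ 1 + q * y ^ p := by gcongr; exact (sum_range_le_pow hq N p).trans hpow
      _ ≤ y := hy

theorem cast_three_one (n : ℕ) :
    (raney 3 1 n : ℝ) = 1 / (2 * (n : ℝ) + 1) * ((3 * n).choose n : ℝ) := by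
  have h := mul_one_eq_choose (p := 3) (by norm_num) n
  rw [show 3 - 1 = 2 by rfl] at h
  rw [← h]
  push_cast
  field_simp

theorem three_one_mul_pow_le_one (n : ℕ) : (raney 3 1 n : ℝ) * (4 / 27) ^ n ≤ 1 := by
  have hchoose : (3 * n).choose n * 4 ^ n ≤ 27 ^ n := by
    have h := Nat.pow_mul_pow_mul_choose_le_add_pow 1 2 (show n ≤ 3 * n by omega)
    rwa [one_pow, one_mul, show 3 * n - n = 2 * n by omega, pow_mul, pow_mul, mul_comm,
      show (1 + 2) ^ 3 = 27 by rfl] at h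
  have hle : raney 3 1 n ≤ (3 * n).choose n := by
    rw [← mul_one_eq_choose (by norm_num)]
    exact Nat.le_mul_of_pos_left _ (by omega)
  rw [div_pow, mul_div_assoc', div_le_one (by positivity)]
  exact_mod_cast (Nat.mul_le_mul_right _ hle).trans hchoose

theorem summable_three_one (hq0 : 0 ≤ q) (hq : q < 4 / 27) :
    Summable fun n => (raney 3 1 n : ℝ) * q ^ n := by
  refine (summable_geometric_of_lt_one (by positivity)
    (show 27 / 4 * q < 1 by linarith)).of_nonneg_of_le (fun n => by positivity) fun n => ?_
  calc (raney 3 1 n : ℝ) * q ^ n = (raney 3 1 n : ℝ) * (4 / 27) ^ n * (27 / 4 * q) ^ n := by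
        rw [mul_assoc, ← mul_pow]; congr 2; ring
    _ ≤ 1 * (27 / 4 * q) ^ n := by gcongr; exact three_one_mul_pow_le_one n
    _ = (27 / 4 * q) ^ n := one_mul _

end raney

theorem eq_of_eq_one_add_mul_pow_three {q s t : ℝ} (hq : q < 4 / 27) (hs0 : 0 ≤ s)
    (hs : s ≤ 3 / 2) (ht0 : 0 ≤ t) (ht : t ≤ 3 / 2) (hs' : s = 1 + q * s ^ 3)
    (ht' : t = 1 + q * t ^ 3) : s = t := by
  have hfactor : (s - t) * (1 - q * (s ^ 2 + s * t + t ^ 2)) = 0 := by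
    linear_combination hs' - ht'
  have hsq : s ^ 2 + s * t + t ^ 2 ≤ 27 / 4 := by nlinarith
  have hlt : q * (s ^ 2 + s * t + t ^ 2) < 1 := by
    rcases le_or_gt q 0 with hq0 | hq0
    · nlinarith [mul_nonneg (neg_nonneg.mpr hq0) (by positivity : 0 ≤ s ^ 2 + s * t + t ^ 2)]
    · nlinarith [mul_le_mul_of_nonneg_left hsq hq0.le]
  rcases mul_eq_zero.mp hfactor with h | h
  · linarith
  · linarith

namespace Real

theorem three_div_sin_three_mul_mul_sin_eq {θ : ℝ} (h : sin (3 * θ) ≠ 0) :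
    3 / sin (3 * θ) * sin θ = 1 + 4 * sin (3 * θ) ^ 2 / 27 * (3 / sin (3 * θ) * sin θ) ^ 3 := by
  field_simp
  rw [sin_three_mul] at h ⊢
  ring

theorem three_div_sin_three_mul_mul_sin_mem_Icc {θ : ℝ} (h0 : 0 < θ) (h : θ ≤ π / 6) :
    3 / sin (3 * θ) * sin θ ∈ Set.Icc 0 (3 / 2) := by
  have hs0 : 0 < sin θ := sin_pos_of_pos_of_lt_pi h0 (by linarith [pi_pos])
  have hs : sin θ ≤ 1 / 2 := by
    rw [← sin_pi_div_six]
    exact sin_le_sin_of_le_of_le_pi_div_two (by linarith [pi_pos]) (by linarith [pi_pos]) h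
  have hsq : 0 ≤ 1 / 4 - sin θ ^ 2 := by nlinarith
  have h3 : 0 < sin (3 * θ) := by
    rw [sin_three_mul]
    nlinarith [mul_nonneg hs0.le hsq]
  refine ⟨by positivity, ?_⟩
  rw [div_mul_eq_mul_div, div_le_iff₀ h3, sin_three_mul]
  nlinarith [mul_nonneg hs0.le hsq]

end Real

/-- For `0 < x < 1`, the generating function of the 3-Catalan numbers satisfies
`A_2(4x²/27) = (3/x) sin((1/3) arcsin x)`. -/
theorem a2_trigonometric (x : ℝ) (hx : 0 < x) (hx1 : x < 1) :
    ∑' n : ℕ, (1 / (2 * (n : ℝ) + 1)) * (Nat.choose (3 * n) n : ℝ) *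
        (4 * x ^ 2 / 27) ^ n =
      (3 / x) * Real.sin ((1 / 3) * Real.arcsin x) := by
  set θ := 1 / 3 * arcsin x with hθ_def
  have hx3θ : sin (3 * θ) = x := by
    rw [show 3 * θ = arcsin x by ring]
    exact sin_arcsin (by linarith) hx1.le
  have hθ0 : 0 < θ := by have := arcsin_pos.mpr hx; positivity
  have hθ : θ ≤ π / 6 := by have := arcsin_le_pi_div_two x; linarith
  have hq0 : 0 ≤ 4 * x ^ 2 / 27 := by positivity
  have hq : 4 * x ^ 2 / 27 < 4 / 27 := by nlinarith
  obtain ⟨hy0, hy⟩ := three_div_sin_three_mul_mul_sin_mem_Icc hθ0 hθ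
  have hy_eq := three_div_sin_three_mul_mul_sin_eq (hx3θ ▸ hx.ne')
  rw [hx3θ] at hy0 hy hy_eq
  simp_rw [← raney.cast_three_one]
  have hsum := raney.summable_three_one hq0 hq
  exact eq_of_eq_one_add_mul_pow_three hq (tsum_nonneg fun n => by positivity)
    ((raney.tsum_one_le_of_one_add_mul_pow_le hq0 hy0 hy_eq.ge).trans hy) hy0 hy
    (raney.tsum_one_eq_one_add_mul_pow hq0 hsum) hy_eq
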